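/- The complex matrix equation AX - X̄B = C (where X̄ is the entrywise complex conjugate of X) has a solution if and only if there exists a nonsingular complex matrix S with S̄⁻¹·[[A, C], [0, B]]·S = [[A, 0], [0, B]]. -/

import Mathlib

/-!
This is Flanders and Wimmer's dimension count for Roth's theorem. Put `M = [[A, C], [0, B]]` and
`N = [[A, 0], [0, B]]`, and look at the real-linear maps `T ↦ M T - T̄ B` and `T ↦ N T - T̄ B` on
`(m + n) × n` matrices; they are only `ℝ`-linear because of the conjugation. If `M S = S̄ N`, then
`T ↦ S T` maps the second kernel onto the first, so the two kernels have the same real dimension.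
Both kernels meet the kernel of the projection `[Q; R] ↦ R` in the same subspace, and the image of
the first kernel lies in the image of the second. Equal dimensions then force the two images to be
equal. The image of the second kernel contains the identity matrix, so some `[Q; 1]` lies in the
first kernel, and `X = -Q` solves `A X - X̄ B = C`.
-/

open Matrix Module

theorem Submodule.finrank_map_add_finrank_inf_ker {K V W : Type*} [DivisionRing K]
    [AddCommGroup V] [Module K V] [FiniteDimensional K V] [AddCommGroup W] [Module K W]
    (p : Submodule K V) (f : V →ₗ[K] W) :
    finrank K (p.map f) + finrank K ↥(p ⊓ LinearMap.ker f) = finrank K p := by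
  rw [← (f.domRestrict p).finrank_range_add_finrank_ker, LinearMap.range_domRestrict,
    LinearMap.ker_domRestrict, ← Submodule.map_comap_subtype, Submodule.finrank_map_subtype_eq]

theorem Submodule.map_eq_of_finrank_eq_of_inf_ker_eq {K V W : Type*} [DivisionRing K]
    [AddCommGroup V] [Module K V] [FiniteDimensional K V] [AddCommGroup W] [Module K W]
    {p q : Submodule K V} (f : V →ₗ[K] W) (hpq : finrank K p = finrank K q)
    (hker : p ⊓ LinearMap.ker f = q ⊓ LinearMap.ker f) (hle : p.map f ≤ q.map f) :
    p.map f = q.map f := by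
  refine Submodule.eq_of_le_of_finrank_le hle ?_
  have hp := p.finrank_map_add_finrank_inf_ker f
  have hq := q.finrank_map_add_finrank_inf_ker f
  rw [hker] at hp
  omega

namespace Matrix

variable (R : Type*) {A : Type*} [Semiring R]

noncomputable def unitsMulLeftLinearEquiv {ι κ : Type*} [Fintype ι] [DecidableEq ι] [Semiring A]
    [Module R A] [SMulCommClass R A A] (u : (Matrix ι ι A)ˣ) : Matrix ι κ A ≃ₗ[R] Matrix ι κ A :=
  .ofLinearMap (mulLeftLinearMap κ R (u : Matrix ι ι A)) (mulLeftLinearMap κ R ↑u⁻¹)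
    (LinearMap.ext fun T => by simp [← Matrix.mul_assoc])
    (LinearMap.ext fun T => by simp [← Matrix.mul_assoc])

def toRows₂LinearMap {m₁ m₂ n : Type*} [AddCommMonoid A] [Module R A] :
    Matrix (m₁ ⊕ m₂) n A →ₗ[R] Matrix m₂ n A where
  toFun := toRows₂
  map_add' _ _ := rfl
  map_smul' _ _ := rfl

theorem toRows₂LinearMap_apply {m₁ m₂ n : Type*} [AddCommMonoid A] [Module R A]
    (T : Matrix (m₁ ⊕ m₂) n A) : toRows₂LinearMap R T = T.toRows₂ :=
  rfl

end Matrix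

section ConjSylvester

variable {ι κ : Type*} [Fintype ι] [Fintype κ]

noncomputable def conjSylvester (K : Matrix ι ι ℂ) (L : Matrix κ κ ℂ) :
    Matrix ι κ ℂ →ₗ[ℝ] Matrix ι κ ℂ :=
  mulLeftLinearMap κ ℝ K - (mulRightLinearMap ι ℝ L).comp Complex.conjAe.toLinearMap.mapMatrix

theorem conjSylvester_apply (K : Matrix ι ι ℂ) (L : Matrix κ κ ℂ) (T : Matrix ι κ ℂ) :
    conjSylvester K L T = K * T - T.map (starRingEnd ℂ) * L :=
  rfl

theorem conjSylvester_mul_left {K K' S : Matrix ι ι ℂ} (L : Matrix κ κ ℂ)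
    (h : K' * S = S.map (starRingEnd ℂ) * K) (T : Matrix ι κ ℂ) :
    conjSylvester K' L (S * T) = S.map (starRingEnd ℂ) * conjSylvester K L T := by
  simp only [conjSylvester_apply, Matrix.map_mul, Matrix.mul_sub, ← Matrix.mul_assoc, h]

theorem finrank_ker_conjSylvester_eq [DecidableEq ι] {K K' S : Matrix ι ι ℂ} (L : Matrix κ κ ℂ)
    (hS : IsUnit S) (h : K' * S = S.map (starRingEnd ℂ) * K) :
    finrank ℝ (LinearMap.ker (conjSylvester K' L)) =
      finrank ℝ (LinearMap.ker (conjSylvester K L)) := by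
  obtain ⟨u, rfl⟩ := hS
  let ū := Units.map (starRingEnd ℂ).mapMatrix.toMonoidHom u
  have hcomp : (conjSylvester K' L).comp (unitsMulLeftLinearEquiv ℝ u).toLinearMap =
      (unitsMulLeftLinearEquiv ℝ ū).toLinearMap.comp (conjSylvester K L) :=
    LinearMap.ext (conjSylvester_mul_left L h)
  have hker := congrArg LinearMap.ker hcomp
  rw [LinearMap.ker_comp, LinearEquiv.ker_comp] at hker
  rw [← hker]
  exact ((unitsMulLeftLinearEquiv ℝ u).ofSubmodule' _).finrank_eq.symm

end ConjSylvester

section BlockTriangular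

variable {m n κ : Type*} [Fintype m] [Fintype n] [Fintype κ]

theorem conjSylvester_fromBlocks_fromRows (A : Matrix m m ℂ) (B : Matrix n n ℂ)
    (C : Matrix m n ℂ) (L : Matrix κ κ ℂ) (Q : Matrix m κ ℂ) (R : Matrix n κ ℂ) :
    conjSylvester (fromBlocks A C 0 B) L (fromRows Q R) =
      fromRows (conjSylvester A L Q + C * R) (conjSylvester B L R) := by
  simp only [conjSylvester_apply, fromRows_map, fromBlocks_mul_fromRows, fromRows_mul,
    Matrix.zero_mul, zero_add]
  ext (_ | _) _ <;> simp [add_sub_right_comm]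

theorem conjSylvester_fromBlocks_fromRows_eq_zero_iff (A : Matrix m m ℂ) (B : Matrix n n ℂ)
    (C : Matrix m n ℂ) (L : Matrix κ κ ℂ) (Q : Matrix m κ ℂ) (R : Matrix n κ ℂ) :
    conjSylvester (fromBlocks A C 0 B) L (fromRows Q R) = 0 ↔
      conjSylvester A L Q + C * R = 0 ∧ conjSylvester B L R = 0 := by
  rw [conjSylvester_fromBlocks_fromRows, ← fromRows_zero, fromRows_ext_iff]

theorem exists_conjSylvester_eq_of_finrank_ker_eq {A : Matrix m m ℂ} {B : Matrix n n ℂ}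
    {C : Matrix m n ℂ} [DecidableEq n]
    (h : finrank ℝ (LinearMap.ker (conjSylvester (fromBlocks A C 0 B) B)) =
      finrank ℝ (LinearMap.ker (conjSylvester (fromBlocks A 0 0 B) B))) :
    ∃ X, conjSylvester A B X = C := by
  let π : Matrix (m ⊕ n) n ℂ →ₗ[ℝ] Matrix n n ℂ := toRows₂LinearMap ℝ
  have hker : LinearMap.ker (conjSylvester (fromBlocks A C 0 B) B) ⊓ LinearMap.ker π =
      LinearMap.ker (conjSylvester (fromBlocks A 0 0 B) B) ⊓ LinearMap.ker π := by
    ext T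
    rw [← fromRows_toRows T]
    simp only [Submodule.mem_inf, conjSylvester_fromBlocks_fromRows_eq_zero_iff,
      LinearMap.mem_ker, π, toRows₂LinearMap_apply, toRows₂_fromRows]
    exact and_congr_left fun hR => by simp [hR]
  have hle : (LinearMap.ker (conjSylvester (fromBlocks A C 0 B) B)).map π ≤
      (LinearMap.ker (conjSylvester (fromBlocks A 0 0 B) B)).map π := by
    rintro _ ⟨T, hT, rfl⟩
    rw [← fromRows_toRows T, SetLike.mem_coe, LinearMap.mem_ker,
      conjSylvester_fromBlocks_fromRows_eq_zero_iff] at hT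
    refine ⟨fromRows 0 T.toRows₂, ?_, toRows₂_fromRows _ _⟩
    rw [SetLike.mem_coe, LinearMap.mem_ker, conjSylvester_fromBlocks_fromRows_eq_zero_iff]
    simpa using hT.2
  have hone :
      (1 : Matrix n n ℂ) ∈ (LinearMap.ker (conjSylvester (fromBlocks A 0 0 B) B)).map π :=
    ⟨fromRows 0 1, by
      rw [SetLike.mem_coe, LinearMap.mem_ker, conjSylvester_fromBlocks_fromRows_eq_zero_iff]
      simp [conjSylvester_apply],
      toRows₂_fromRows _ _⟩
  rw [← Submodule.map_eq_of_finrank_eq_of_inf_ker_eq π h hker hle] at hone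
  obtain ⟨T, hT, hR : T.toRows₂ = 1⟩ := hone
  rw [← fromRows_toRows T, SetLike.mem_coe, LinearMap.mem_ker,
    conjSylvester_fromBlocks_fromRows_eq_zero_iff, hR, Matrix.mul_one] at hT
  refine ⟨-T.toRows₁, ?_⟩
  rw [map_neg, neg_eq_iff_eq_neg]
  exact eq_neg_of_add_eq_zero_left hT.1

theorem fromBlocks_one_mul_fromBlocks_mul_fromBlocks_one {α : Type*} [Ring α] [DecidableEq m]
    [DecidableEq n] (A : Matrix m m α) (B : Matrix n n α) (C X Y : Matrix m n α) :
    fromBlocks 1 Y 0 1 * fromBlocks A C 0 B * fromBlocks 1 (-X) 0 1 =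
      fromBlocks A (C + Y * B - A * X) 0 B := by
  simp [fromBlocks_multiply, sub_eq_add_neg, add_comm]

theorem inv_fromBlocks_one_neg_zero_one {α : Type*} [CommRing α] [DecidableEq m]
    [DecidableEq n] (X : Matrix m n α) :
    (fromBlocks (1 : Matrix m m α) (-X) 0 (1 : Matrix n n α))⁻¹ = fromBlocks 1 X 0 1 :=
  inv_eq_left_inv (by simp [fromBlocks_multiply])

end BlockTriangular

theorem roth_conjugate_complex {m n : ℕ}
    (A : Matrix (Fin m) (Fin m) ℂ) (B : Matrix (Fin n) (Fin n) ℂ)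
    (C : Matrix (Fin m) (Fin n) ℂ) :
    (∃ X : Matrix (Fin m) (Fin n) ℂ,
      A * X - X.map (starRingEnd ℂ) * B = C) ↔
    (∃ S : Matrix (Fin m ⊕ Fin n) (Fin m ⊕ Fin n) ℂ, IsUnit S ∧
      (S.map (starRingEnd ℂ))⁻¹ * fromBlocks A C 0 B * S = fromBlocks A 0 0 B) := by
  constructor
  · rintro ⟨X, rfl⟩
    refine ⟨fromBlocks 1 (-X) 0 1,
      IsUnit.of_mul_eq_one (fromBlocks 1 X 0 1) (by simp [fromBlocks_multiply]), ?_⟩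
    rw [fromBlocks_map, Matrix.map_neg _ (map_neg _), Matrix.map_zero _ (map_zero _),
      Matrix.map_one _ (map_zero _) (map_one _), Matrix.map_one _ (map_zero _) (map_one _),
      inv_fromBlocks_one_neg_zero_one, fromBlocks_one_mul_fromBlocks_mul_fromBlocks_one, sub_add_cancel, sub_self]
  · rintro ⟨S, hS, hSim⟩
    have hconj : IsUnit (S.map (starRingEnd ℂ)).det :=
      (isUnit_iff_isUnit_det _).mp (hS.map (starRingEnd ℂ).mapMatrix)
    refine exists_conjSylvester_eq_of_finrank_ker_eq (finrank_ker_conjSylvester_eq B hS ?_)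
    rw [← hSim, Matrix.mul_assoc, mul_nonsing_inv_cancel_left _ _ hconj]
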